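/- arXiv:2106.00093 — 3 statements merged into one kernel-verified Lean document; each statement's English description precedes it below -/
import Mathlib

section
/- Let g : {0,1}^m → {0,1} depend on all m coordinates and suppose g is not of the form x ↦ (⊕_{i=1}^m x_i) ⊕ b for any b ∈ {0,1}. Then there exist a permutation of the coordinates and a vector α ∈ {0,1}^{m-1} such that g(α_1,…,α_{m-1},0) = g(α_1,…,α_{m-1},1). -/
/-! If no coordinate is ever non-sensitive, flipping any single bit flips `g`. Adding the ones
of `x` to the all-zeros point one at a time then shows that `g x` is `g 0` flipped once per
one of `x`, i.e. `g` is the parity function up to a constant. -/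

open Finset Function

theorem eq_xor_parity_of_update_ne {ι : Type*} [Fintype ι] [DecidableEq ι]
    (g : (ι → Bool) → Bool) (hg : ∀ (j : ι) (α : ι → Bool), g (update α j false) ≠ g (update α j true))
    (x : ι → Bool) :
    g x = xor (g fun _ => false) (decide ((univ.filter fun i => x i = true).card % 2 = 1)) := by
  suffices key : ∀ s : Finset ι,
      g (fun i => decide (i ∈ s)) = xor (g fun _ => false) (decide (s.card % 2 = 1)) by
    convert key (univ.filter fun i => x i = true) using 2
    ext i
    simp
  intro s
  induction s using Finset.induction_on with
  | empty => simp
  | insert a s ha ih =>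
    have h_false : update (fun i => decide (i ∈ s)) a false = fun i => decide (i ∈ s) := by
      ext i
      by_cases hi : i = a <;> simp_all
    have h_true : update (fun i => decide (i ∈ s)) a true = fun i => decide (i ∈ insert a s) := by
      ext i
      by_cases hi : i = a <;> simp_all
    have h_flip := hg a fun i => decide (i ∈ s)
    rw [h_false, h_true, ne_comm, ← Bool.eq_not_iff] at h_flip
    rw [h_flip, ih, card_insert_of_notMem ha]
    rcases Nat.mod_two_eq_zero_or_one s.card with h | h <;> simp [h, Nat.succ_mod_two_eq_one_iff]

theorem exists_nonsensitive_coordinate_general {m : ℕ} (g : (Fin m → Bool) → Bool)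
    (hxor : ¬ ∃ b : Bool, ∀ x : Fin m → Bool,
      g x = xor b (decide ((Finset.univ.filter fun i => x i = true).card % 2 = 1))) :
    ∃ (j : Fin m) (α : Fin m → Bool),
      g (Function.update α j false) = g (Function.update α j true) := by
  by_contra! h_sensitive
  exact hxor ⟨_, eq_xor_parity_of_update_ne g h_sensitive⟩

/-- If `g : {0,1}^m → {0,1}` depends on all coordinates and is not of the
form `x ↦ (⊕ᵢ xᵢ) ⊕ b`, then (after a suitable reordering of coordinates) there is a
point `α` at which some coordinate is non-sensitive, i.e. there exist a coordinate `j`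
and `α` with `g(α[j ↦ 0]) = g(α[j ↦ 1])`. -/
theorem exists_nonsensitive_coordinate {m : ℕ} (g : (Fin m → Bool) → Bool)
    (hdep : ∀ j : Fin m, ∃ x : Fin m → Bool, g x ≠ g (Function.update x j (!(x j))))
    (hxor : ¬ ∃ b : Bool, ∀ x : Fin m → Bool,
      g x = xor b (decide ((Finset.univ.filter fun i => x i = true).card % 2 = 1))) :
    ∃ (j : Fin m) (α : Fin m → Bool),
      g (Function.update α j false) = g (Function.update α j true) :=
  exists_nonsensitive_coordinate_general g hxor
end

section
/- A function f : {0,1}^n → {0,1} is a polymorphism of the anti-dictator g(x) = ¬x_j (for some fixed j ∈ [m], m ≥ 1) if and only if f is odd, i.e., f(¬x_1,…,¬x_n) = ¬f(x_1,…,x_n) for all x. -/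
/-- `f` is a polymorphism of `g`. -/
def IsPolymorphism {n m : ℕ} (f : (Fin n → Bool) → Bool) (g : (Fin m → Bool) → Bool) : Prop :=
  ∀ Z : Fin n → Fin m → Bool,
    f (fun i => g (Z i)) = g (fun j => f (fun i => Z i j))

/-- `f` is a polymorphism of the anti-dictator `g(x) = ¬xⱼ` iff `f` is odd. -/
theorem poly_antidictator_iff {n m : ℕ} (j : Fin m) (f : (Fin n → Bool) → Bool) :
    IsPolymorphism f (fun x => !(x j)) ↔ ∀ x : Fin n → Bool, f (fun i => !(x i)) = !(f x) := by
  constructor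
  · intro h x
    simpa using h (fun i _ => x i)
  · intro h Z
    simpa using h (fun i => Z i j)
end

section
/- Let I ⊆ [n], J ⊆ [m], a, b ∈ {0,1}, and define f(x) = (⊕_{i∈I} x_i) ⊕ a and g(x) = (⊕_{j∈J} x_j) ⊕ b. Then f is a polymorphism of g if and only if a^{⊕(|J|−1)} = b^{⊕(|I|−1)}, where c^{⊕k} denotes the k-fold XOR of c (interpreted as 0 when c = 0 or k is even, and as c when k is odd, extended to negative k). -/
/-- `c^{⊕k}` for an integer `k`: it is `1` iff `c = 1` and `k` is odd. -/
def xorPow (c : Bool) (k : ℤ) : Bool := c && decide (Odd k)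

namespace PolyXorAux

def e (b : Bool) : ZMod 2 := if b then 1 else 0

lemma e_inj : Function.Injective e := by decide

lemma e_xor (b c : Bool) : e (xor b c) = e b + e c := by cases b <;> cases c <;> decide

lemma e_and (b c : Bool) : e (b && c) = e b * e c := by cases b <;> cases c <;> decide

lemma e_oddNat (k : ℕ) : e (decide (Odd k)) = (k : ZMod 2) := by
  rcases Nat.even_or_odd k with h | h
  · rw [decide_eq_false (Nat.not_odd_iff_even.mpr h)]
    obtain ⟨c, rfl⟩ := h
    show (0 : ZMod 2) = _
    push_cast
    rw [CharTwo.add_self_eq_zero]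
  · rw [decide_eq_true h]
    obtain ⟨c, rfl⟩ := h
    show (1 : ZMod 2) = _
    push_cast
    rw [two_mul, CharTwo.add_self_eq_zero, zero_add]

lemma e_oddInt (k : ℤ) : e (decide (Odd k)) = (k : ZMod 2) := by
  rcases Int.even_or_odd k with h | h
  · rw [decide_eq_false (Int.not_odd_iff_even.mpr h)]
    obtain ⟨c, rfl⟩ := h
    show (0 : ZMod 2) = _
    push_cast
    rw [CharTwo.add_self_eq_zero]
  · rw [decide_eq_true h]
    obtain ⟨c, rfl⟩ := h
    show (1 : ZMod 2) = _
    push_cast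
    rw [two_mul, CharTwo.add_self_eq_zero, zero_add]

lemma parity_card {α : Type*} (s : Finset α) (x : α → Bool) :
    e (decide (Odd (s.filter fun i => x i = true).card)) = ∑ i ∈ s, e (x i) := by
  rw [e_oddNat, Finset.card_filter]
  push_cast
  refine Finset.sum_congr rfl fun i _ => ?_
  by_cases h : x i = true <;> simp [h, e]

lemma alg : ∀ p q u v : ZMod 2,
    ((u * q + p = v * p + q) ↔ (p * (v - 1) = q * (u - 1))) := by decide

end PolyXorAux

open PolyXorAux in
/-- `f(x) = (⊕_{i∈I} xᵢ) ⊕ a` is a polymorphism of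
`g(x) = (⊕_{j∈J} xⱼ) ⊕ b` iff `a^{⊕(|J|−1)} = b^{⊕(|I|−1)}`. -/
theorem poly_xor_iff {n m : ℕ} (I : Finset (Fin n)) (J : Finset (Fin m)) (a b : Bool) :
    IsPolymorphism
      (fun x : Fin n → Bool => xor (decide (Odd (I.filter fun i => x i = true).card)) a)
      (fun y : Fin m → Bool => xor (decide (Odd (J.filter fun j => y j = true).card)) b)
    ↔ xorPow a ((J.card : ℤ) - 1) = xorPow b ((I.card : ℤ) - 1) := by
  have eL : ∀ Z : Fin n → Fin m → Bool,
      e (xor (decide (Odd (I.filter fun i =>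
          xor (decide (Odd (J.filter fun j => Z i j = true).card)) b = true).card)) a)
      = (∑ i ∈ I, ∑ j ∈ J, e (Z i j)) + (I.card : ZMod 2) * e b + e a := by
    intro Z
    rw [e_xor, parity_card]
    simp only [e_xor, parity_card]
    rw [Finset.sum_add_distrib, Finset.sum_const, nsmul_eq_mul]
  have eR : ∀ Z : Fin n → Fin m → Bool,
      e (xor (decide (Odd (J.filter fun j =>
          xor (decide (Odd (I.filter fun i => Z i j = true).card)) a = true).card)) b)
      = (∑ i ∈ I, ∑ j ∈ J, e (Z i j)) + (J.card : ZMod 2) * e a + e b := by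
    intro Z
    rw [e_xor, parity_card]
    simp only [e_xor, parity_card]
    rw [Finset.sum_add_distrib, Finset.sum_const, nsmul_eq_mul, Finset.sum_comm]
  have hxp : (xorPow a ((J.card : ℤ) - 1) = xorPow b ((I.card : ℤ) - 1))
      ↔ e a * ((J.card : ZMod 2) - 1) = e b * ((I.card : ZMod 2) - 1) := by
    rw [← e_inj.eq_iff, xorPow, xorPow, e_and, e_and, e_oddInt, e_oddInt]
    push_cast
    exact Iff.rfl
  constructor
  · intro h
    rw [hxp, ← alg]
    have h1 := congrArg e (h fun _ _ => false)
    beta_reduce at h1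
    rw [eL, eR] at h1
    simpa [e] using h1
  · intro h Z
    apply e_inj
    beta_reduce
    rw [eL, eR]
    have h1 := (alg (e a) (e b) (I.card : ZMod 2) (J.card : ZMod 2)).2 (hxp.1 h)
    rw [add_assoc, add_assoc, h1]
end
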